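/- Let s ≥ 1 and k ≤ s. Consider the measure μ_s placing mass 1/(8s) on each of the 4s shifts of (1^s0^{3s})^* and each of the 4s shifts of (1^{3s}0^s)^*, and the measure ν placing mass 1/2 on each of 0^* and 1^*. Then for every cylinder [σ] with length(σ) ≤ k, |μ_s([σ]) − ν([σ])| ≤ k/(4s). -/

import Mathlib

open MeasureTheory
open scoped ENNReal

/-!
Read through a window of length `L ≤ min(t, n - t)`, the shifts of the periodic word
`(1^t 0^(n-t))^*` show `1^L` for `t + 1 - L` of them, `0^L` for `n + 1 - L - t` of them, and each
word with exactly one change of letter, `1^a 0^(L-a)` or `0^a 1^(L-a)`, for exactly one of them;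
a window never meets two changes. With `n = 4s` and `t ∈ {s, 3s}`, a constant word therefore
has `μ`-mass `1/2 - (L - 1)/(4s)`, a word with one change has mass `1/(4s)` and every other
word mass `0`, while `ν` gives `1/2` to each constant word and `0` otherwise.
-/

open Finset

def prefixCylinder {α : Type*} (L : ℕ) (w : ℕ → α) : Set (ℕ → α) :=
  {ω | ∀ i < L, ω i = w i}

instance {α : Type*} [DecidableEq α] (L : ℕ) (w : ℕ → α) :
    DecidablePred (· ∈ prefixCylinder L w) :=
  fun ω => inferInstanceAs (Decidable (∀ i < L, ω i = w i))

lemma prefixCylinder_congr {α : Type*} {L : ℕ} {w w' : ℕ → α} (h : ∀ i < L, w i = w' i) :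
    prefixCylinder L w = prefixCylinder L w' := by
  ext ω
  exact forall₂_congr fun i hi => by rw [h i hi]

lemma const_mem_prefixCylinder_iff {α : Type*} {L : ℕ} {w : ℕ → α} {a : α} :
    (fun _ => a) ∈ prefixCylinder L w ↔ ∀ i < L, w i = a :=
  forall₂_congr fun _ _ => eq_comm

lemma prefix_const_or_step_or_two_changes (w : ℕ → Bool) (L : ℕ) :
    (∀ i < L, w i = true) ∨ (∀ i < L, w i = false) ∨
    (∃ a, 0 < a ∧ a < L ∧ ∀ i < L, w i = decide (i < a)) ∨
    (∃ a, 0 < a ∧ a < L ∧ ∀ i < L, w i = decide (a ≤ i)) ∨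
    ∃ i₀ i₁, i₀ < i₁ ∧ i₁ + 1 < L ∧ w i₀ ≠ w (i₀ + 1) ∧ w i₁ ≠ w (i₁ + 1) := by
  induction L with
  | zero => simp
  | succ L ih =>
    simp only [Nat.forall_lt_succ_right]
    rcases ih with h | h | ⟨a, ha, haL, h⟩ | ⟨a, ha, haL, h⟩ | ⟨i₀, i₁, hi, hiL, h₀, h₁⟩
    · cases hL : w L
      · rcases Nat.eq_zero_or_pos L with rfl | hL0
        · simp
        · refine .inr <| .inr <| .inl ⟨L, hL0, by omega, fun i hi => ?_, by simp⟩
          simp [h i hi, hi]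
      · exact .inl ⟨h, rfl⟩
    · cases hL : w L
      · exact .inr <| .inl ⟨h, rfl⟩
      · rcases Nat.eq_zero_or_pos L with rfl | hL0
        · simp
        · refine .inr <| .inr <| .inr <| .inl ⟨L, hL0, by omega, fun i hi => ?_, by simp⟩
          simp [h i hi, hi]
    · cases hL : w L
      · exact .inr <| .inr <| .inl ⟨a, ha, by omega, h, (decide_eq_false (by omega)).symm⟩
      · refine .inr <| .inr <| .inr <| .inr ⟨a - 1, L - 1, by omega, by omega, ?_, ?_⟩
        · rw [h (a - 1) (by omega), Nat.sub_add_cancel ha, h a haL]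
          simp only [ne_eq, decide_eq_decide]
          omega
        · rw [h (L - 1) (by omega), Nat.sub_add_cancel (by omega), hL]
          simp only [ne_eq, decide_eq_true_eq]
          omega
    · cases hL : w L
      · refine .inr <| .inr <| .inr <| .inr ⟨a - 1, L - 1, by omega, by omega, ?_, ?_⟩
        · rw [h (a - 1) (by omega), Nat.sub_add_cancel ha, h a haL]
          simp only [ne_eq, decide_eq_decide]
          omega
        · rw [h (L - 1) (by omega), Nat.sub_add_cancel (by omega), hL]
          simp only [ne_eq, decide_eq_false_iff_not, not_not]
          omega
      · exact .inr <| .inr <| .inr <| .inl ⟨a, ha, by omega, h, (decide_eq_true (by omega)).symm⟩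
    · exact .inr <| .inr <| .inr <| .inr ⟨i₀, i₁, hi, by omega, h₀, h₁⟩

/-- The `j`-th shift of `(1^t 0^(n-t))^*`. -/
def shiftedBlock (n t j : ℕ) : ℕ → Bool := fun i => decide ((i + j) % n < t)

def blockCount (n t L : ℕ) (w : ℕ → Bool) : ℕ :=
  #{j ∈ range n | shiftedBlock n t j ∈ prefixCylinder L w}

section window

variable {n t L : ℕ}

lemma shiftedBlock_apply (htn : t + L ≤ n) (hLt : L ≤ t) {i j : ℕ} (hj : j < n) (hi : i < L) :
    shiftedBlock n t j i = decide (i + j < t ∨ n ≤ i + j) := by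
  simp only [shiftedBlock, decide_eq_decide]
  rcases lt_or_ge (i + j) n with h | h
  · rw [Nat.mod_eq_of_lt h]
    omega
  · rw [Nat.mod_eq_sub_mod h, Nat.mod_eq_of_lt (by omega)]
    omega

lemma blockCount_eq_card_filter (htn : t + L ≤ n) (hLt : L ≤ t) (w : ℕ → Bool) :
    blockCount n t L w =
      #{j ∈ range n | ∀ i < L, decide (i + j < t ∨ n ≤ i + j) = w i} := by
  unfold blockCount
  congr 1
  refine filter_congr fun j hj => forall₂_congr fun i hi => ?_
  rw [shiftedBlock_apply htn hLt (mem_range.1 hj) hi]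

lemma blockCount_zero (w : ℕ → Bool) : blockCount n t 0 w = n := by
  rw [blockCount, filter_true_of_mem fun j _ i hi => absurd hi (Nat.not_lt_zero i), card_range]

lemma blockCount_true (htn : t + L ≤ n) (hLt : L ≤ t) (hL : 0 < L) :
    blockCount n t L (fun _ => true) = t + 1 - L := by
  rw [blockCount_eq_card_filter htn hLt, ← card_range (t + 1 - L)]
  congr 1
  ext j
  simp only [mem_filter, mem_range, decide_eq_true_iff]
  constructor
  · rintro ⟨hj, h⟩
    have := h 0 hL
    have := h (L - 1) (by omega)
    omega
  · intro hj
    exact ⟨by omega, fun i hi => by omega⟩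

lemma blockCount_false (htn : t + L ≤ n) (hLt : L ≤ t) (hL : 0 < L) :
    blockCount n t L (fun _ => false) = n + 1 - L - t := by
  rw [blockCount_eq_card_filter htn hLt, ← Nat.card_Ico t (n + 1 - L)]
  congr 1
  ext j
  simp only [mem_filter, mem_range, mem_Ico, decide_eq_false_iff_not]
  constructor
  · rintro ⟨hj, h⟩
    have := h 0 hL
    have := h (L - 1) (by omega)
    omega
  · intro hj
    exact ⟨by omega, fun i hi => by omega⟩

lemma blockCount_stepDown (htn : t + L ≤ n) (hLt : L ≤ t) {a : ℕ} (ha : 0 < a) (haL : a < L) :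
    blockCount n t L (fun i => decide (i < a)) = 1 := by
  rw [blockCount_eq_card_filter htn hLt, ← card_singleton (t - a)]
  congr 1
  ext j
  simp only [mem_filter, mem_range, mem_singleton, decide_eq_decide]
  constructor
  · rintro ⟨hj, h⟩
    have := h (a - 1) (by omega)
    have := h a haL
    omega
  · intro hj
    exact ⟨by omega, fun i hi => by omega⟩

lemma blockCount_stepUp (htn : t + L ≤ n) (hLt : L ≤ t) {a : ℕ} (ha : 0 < a) (haL : a < L) :
    blockCount n t L (fun i => decide (a ≤ i)) = 1 := by
  rw [blockCount_eq_card_filter htn hLt, ← card_singleton (n - a)]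
  congr 1
  ext j
  simp only [mem_filter, mem_range, mem_singleton, decide_eq_decide]
  constructor
  · rintro ⟨hj, h⟩
    have := h (a - 1) (by omega)
    have := h a haL
    omega
  · intro hj
    exact ⟨by omega, fun i hi => by omega⟩

lemma blockCount_of_two_changes (htn : t + L ≤ n) (hLt : L ≤ t) {w : ℕ → Bool} {i₀ i₁ : ℕ}
    (hi : i₀ < i₁) (hiL : i₁ + 1 < L) (h₀ : w i₀ ≠ w (i₀ + 1)) (h₁ : w i₁ ≠ w (i₁ + 1)) :
    blockCount n t L w = 0 := by
  rw [blockCount_eq_card_filter htn hLt, card_eq_zero, filter_eq_empty_iff]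
  intro j hj h
  rw [← h i₀ (by omega), ← h (i₀ + 1) (by omega), ne_eq, decide_eq_decide] at h₀
  rw [← h i₁ (by omega), ← h (i₁ + 1) (by omega), ne_eq, decide_eq_decide] at h₁
  have := mem_range.1 hj
  omega

end window

lemma blockCount_congr {n t L : ℕ} {w w' : ℕ → Bool} (h : ∀ i < L, w i = w' i) :
    blockCount n t L w = blockCount n t L w' := by
  simp only [blockCount, prefixCylinder_congr h]

lemma abs_blockCount_add_sub_le {s L : ℕ} (hL : L ≤ s) (w : ℕ → Bool) :
    |((blockCount (4 * s) s L w + blockCount (4 * s) (3 * s) L w : ℕ) : ℤ) -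
      4 * s * ((if (fun _ => false) ∈ prefixCylinder L w then 1 else 0) +
        (if (fun _ => true) ∈ prefixCylinder L w then 1 else 0))| ≤ 2 * L := by
  have h₁ : s + L ≤ 4 * s := by omega
  have h₃ : 3 * s + L ≤ 4 * s := by omega
  simp only [const_mem_prefixCylinder_iff, abs_le]
  rcases Nat.eq_zero_or_pos L with rfl | hL0
  · simp only [blockCount_zero, not_lt_zero, IsEmpty.forall_iff, implies_true, if_true]
    omega
  rcases prefix_const_or_step_or_two_changes w L with
    h | h | ⟨a, ha, haL, h⟩ | ⟨a, ha, haL, h⟩ | ⟨i₀, i₁, hi, hiL, hc₀, hc₁⟩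
  · have hf : ¬ ∀ i < L, w i = false := fun h' => by simpa [h 0 hL0] using h' 0 hL0
    rw [blockCount_congr h, blockCount_congr h, blockCount_true h₁ hL hL0,
      blockCount_true h₃ (by omega) hL0, if_neg hf, if_pos h]
    omega
  · have ht : ¬ ∀ i < L, w i = true := fun h' => by simpa [h 0 hL0] using h' 0 hL0
    rw [blockCount_congr h, blockCount_congr h, blockCount_false h₁ hL hL0,
      blockCount_false h₃ (by omega) hL0, if_pos h, if_neg ht]
    omega
  · have hf : ¬ ∀ i < L, w i = false := fun h' => by simpa [h 0 hL0, ha.ne'] using h' 0 hL0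
    have ht : ¬ ∀ i < L, w i = true := fun h' => by simpa [h a haL] using h' a haL
    rw [blockCount_congr h, blockCount_congr h, blockCount_stepDown h₁ hL ha haL,
      blockCount_stepDown h₃ (by omega) ha haL, if_neg hf, if_neg ht]
    omega
  · have hf : ¬ ∀ i < L, w i = false := fun h' => by simpa [h a haL] using h' a haL
    have ht : ¬ ∀ i < L, w i = true := fun h' => by simpa [h 0 hL0, ha.ne'] using h' 0 hL0
    rw [blockCount_congr h, blockCount_congr h, blockCount_stepUp h₁ hL ha haL,
      blockCount_stepUp h₃ (by omega) ha haL, if_neg hf, if_neg ht]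
    omega
  · have hconst (b : Bool) : ¬ ∀ i < L, w i = b := fun h' =>
      hc₀ ((h' i₀ (by omega)).trans (h' (i₀ + 1) (by omega)).symm)
    rw [blockCount_of_two_changes h₁ hL hi hiL hc₀ hc₁,
      blockCount_of_two_changes h₃ (by omega) hi hiL hc₀ hc₁, if_neg (hconst _),
      if_neg (hconst _)]
    omega

lemma finsetSum_dirac_apply {ι α : Type*} [MeasurableSpace α] [MeasurableSingletonClass α]
    (A : Finset ι) (f : ι → α) (S : Set α) [DecidablePred (f · ∈ S)] :
    (∑ j ∈ A, Measure.dirac (f j)) S = #{j ∈ A | f j ∈ S} := by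
  simp only [Measure.finsetSum_apply, Measure.dirac_apply, Set.indicator_apply, Pi.one_apply,
    sum_boole]

lemma toReal_smul_sum_dirac_shiftedBlock_apply (c : ℝ≥0∞) (n t t' L : ℕ)
    (w : ℕ → Bool) :
    ((c • ∑ j ∈ range n, (Measure.dirac (shiftedBlock n t j) +
      Measure.dirac (shiftedBlock n t' j))) (prefixCylinder L w)).toReal =
      c.toReal * (blockCount n t L w + blockCount n t' L w) := by
  rw [Measure.smul_apply, sum_add_distrib, Measure.add_apply, finsetSum_dirac_apply,
    finsetSum_dirac_apply, smul_eq_mul, ENNReal.toReal_mul, ENNReal.toReal_add (by simp) (by simp)]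
  rfl

lemma toReal_half_dirac_add_half_dirac_apply {α : Type*} [MeasurableSpace α]
    [MeasurableSingletonClass α] (a b : α) (S : Set α) [Decidable (a ∈ S)] [Decidable (b ∈ S)] :
    (((2 : ℝ≥0∞)⁻¹ • Measure.dirac a + (2 : ℝ≥0∞)⁻¹ • Measure.dirac b) S).toReal =
      ((if a ∈ S then 1 else 0) + (if b ∈ S then 1 else 0)) / 2 := by
  simp only [Measure.add_apply, Measure.smul_apply, Measure.dirac_apply, Set.indicator_apply,
    Pi.one_apply, smul_eq_mul]
  split_ifs <;> norm_num [ENNReal.inv_two_add_inv_two]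

lemma abs_inv_mul_sub_div_two_le {s N c L k : ℝ} (hs : 0 < s) (h : |N - 4 * s * c| ≤ 2 * L)
    (hLk : L ≤ k) : |(8 * s)⁻¹ * N - c / 2| ≤ k / (4 * s) := by
  have hdiff : (8 * s)⁻¹ * N - c / 2 = (N - 4 * s * c) / (8 * s) := by
    field_simp
    ring
  calc |(8 * s)⁻¹ * N - c / 2| = |N - 4 * s * c| / (8 * s) := by
        rw [hdiff, abs_div, abs_of_pos (by positivity : 0 < 8 * s)]
    _ ≤ 2 * L / (8 * s) := by gcongr
    _ = L / (4 * s) := by field_simp; ring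
    _ ≤ k / (4 * s) := by gcongr

/-- Let `s ≥ 1` and `k ≤ s`.  With `μ` the uniform measure on the `8s` shifts of
`(1^s0^{3s})^*` and `(1^{3s}0^s)^*`, and `ν` the measure putting mass `1/2` on each of
`0^*` and `1^*`: for every cylinder `[σ]` with `length σ ≤ k`,
`|μ [σ] − ν [σ]| ≤ k/(4s)`. -/
theorem stmt17 (s k : ℕ) (hs : 1 ≤ s) (hk : k ≤ s)
    (μ ν : Measure (ℕ → Bool))
    (hμ : μ = (8 * (s : ℝ≥0∞))⁻¹ •
      ∑ j ∈ Finset.range (4 * s),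
        (Measure.dirac (fun i : ℕ => decide ((i + j) % (4 * s) < s)) +
         Measure.dirac (fun i : ℕ => decide ((i + j) % (4 * s) < 3 * s))))
    (hν : ν = (2 : ℝ≥0∞)⁻¹ • Measure.dirac (fun _ : ℕ => false) +
              (2 : ℝ≥0∞)⁻¹ • Measure.dirac (fun _ : ℕ => true)) :
    ∀ σ : List Bool, σ.length ≤ k →
      |(μ {ω | ∀ i < σ.length, ω i = σ.getD i false}).toReal -
        (ν {ω | ∀ i < σ.length, ω i = σ.getD i false}).toReal| ≤ (k : ℝ) / (4 * s) := by
  subst hμ hν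
  intro σ hσ
  have hcyl : {ω | ∀ i < σ.length, ω i = σ.getD i false} =
      prefixCylinder σ.length (σ.getD · false) :=
    rfl
  have hblock (t j : ℕ) :
      (fun i => decide ((i + j) % (4 * s) < t)) = shiftedBlock (4 * s) t j :=
    rfl
  simp only [hcyl, hblock]
  rw [toReal_smul_sum_dirac_shiftedBlock_apply, toReal_half_dirac_add_half_dirac_apply]
  simp only [ENNReal.toReal_inv, ENNReal.toReal_mul, ENNReal.toReal_ofNat, ENNReal.toReal_natCast]
  have hcount := (Int.cast_le (R := ℝ)).2 (abs_blockCount_add_sub_le (hσ.trans hk) (σ.getD · false))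
  push_cast at hcount
  exact abs_inv_mul_sub_div_two_le (by exact_mod_cast hs) hcount (by exact_mod_cast hσ)
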